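/- arXiv:2210.10401 — 4 statements merged into one kernel-verified Lean document; each statement's English description precedes it below -/
import Mathlib

section
/- Let ν : ℝ⁴ → ℂ be differentiable and define μ : ℝ⁵ → ℂ by μ(θ₁, θ₂, θ₃, θ₄, θ₅) = ν(θ₁, θ₂ + θ₃, θ₄, θ₅). Then at every point θ, ∂μ/∂θ₂(θ) = ∂μ/∂θ₃(θ). Consequently, for any finite family of functions μ_s of this form (each μ_s(θ) = ν_s(θ₁, θ₂+θ₃, θ₄, θ₅) with differentiable ν_s) and any σ > 0, the summed Fisher information matrix J = Σ_s (2/σ²)·Re( conj(∂μ_s/∂θ_i) · ∂μ_s/∂θ_j ) has its second row equal to its third row and its second column equal to its third column, and J is not invertible. -/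
/-! The map `θ ↦ (θ₁, θ₂ + θ₃, θ₄, θ₅)` is constant along the direction `e₂ - e₃`, hence so is each
`μ_s`, and its derivative in that direction vanishes. The Fisher information matrix is a real Gram
matrix of the partial derivatives, so its second and third rows (and columns) coincide and its
determinant is zero. -/

open ComplexConjugate

section FDeriv

variable {𝕜 E F : Type*} [NontriviallyNormedField 𝕜] [NormedAddCommGroup E] [NormedSpace 𝕜 E]
  [NormedAddCommGroup F] [NormedSpace 𝕜 F] {f : E → F} {x w u v : E}

theorem fderiv_apply_eq_zero_of_forall_add_smul (h : ∀ t : 𝕜, f (x + t • w) = f x) :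
    fderiv 𝕜 f x w = 0 := by
  by_cases hf : DifferentiableAt 𝕜 f x
  · rw [← hf.lineDeriv_eq_fderiv, lineDeriv]
    simp only [h, deriv_const]
  · rw [fderiv_zero_of_not_differentiableAt hf, zero_apply]

theorem fderiv_apply_eq_of_forall_add_smul_sub (h : ∀ t : 𝕜, f (x + t • (u - v)) = f x) :
    fderiv 𝕜 f x u = fderiv 𝕜 f x v := by
  rw [← sub_eq_zero, ← map_sub]
  exact fderiv_apply_eq_zero_of_forall_add_smul h

end FDeriv

section RealGram

variable {ι S : Type*} [Fintype S] {J : Matrix ι ι ℝ} {g : S → ι → ℂ} {c : ℝ} {a b : ι}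

theorem Matrix.row_eq_of_eq_sum_re_conj_mul
    (hJ : ∀ i j, J i j = ∑ s, c * (conj (g s i) * g s j).re) (hg : ∀ s, g s a = g s b) :
    J a = J b := by
  ext j
  simp only [hJ, hg]

theorem Matrix.col_eq_of_eq_sum_re_conj_mul
    (hJ : ∀ i j, J i j = ∑ s, c * (conj (g s i) * g s j).re) (hg : ∀ s, g s a = g s b) (i : ι) :
    J i a = J i b := by
  simp only [hJ, hg]

end RealGram

theorem Matrix.not_isUnit_of_row_eq {n R : Type*} [Fintype n] [DecidableEq n] [CommRing R]
    [Nontrivial R] {M : Matrix n n R} {a b : n} (hab : a ≠ b) (hM : M a = M b) : ¬ IsUnit M := by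
  rw [Matrix.isUnit_iff_isUnit_det, Matrix.det_zero_of_row_eq hab hM]
  exact not_isUnit_zero

theorem stmt9_general (S : Type*) [Fintype S]
    (ν : S → (Fin 4 → ℝ) → ℂ)
    (μ : S → (Fin 5 → ℝ) → ℂ)
    (hμ : ∀ s θ, μ s θ = ν s ![θ 0, θ 1 + θ 2, θ 3, θ 4])
    (σ : ℝ) (θ : Fin 5 → ℝ)
    (J : Matrix (Fin 5) (Fin 5) ℝ)
    (hJ : ∀ i j, J i j = ∑ s, (2 / σ ^ 2) *
      ((starRingEnd ℂ) (fderiv ℝ (μ s) θ (Pi.single i 1)) *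
        fderiv ℝ (μ s) θ (Pi.single j 1)).re) :
    (∀ s (θ' : Fin 5 → ℝ),
        fderiv ℝ (μ s) θ' (Pi.single 1 1) = fderiv ℝ (μ s) θ' (Pi.single 2 1))
    ∧ (∀ j, J 1 j = J 2 j) ∧ (∀ i, J i 1 = J i 2) ∧ ¬ IsUnit J := by
  have hpartial : ∀ s (θ' : Fin 5 → ℝ),
      fderiv ℝ (μ s) θ' (Pi.single 1 1) = fderiv ℝ (μ s) θ' (Pi.single 2 1) := by
    refine fun s θ' ↦ fderiv_apply_eq_of_forall_add_smul_sub fun t ↦ ?_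
    rw [hμ, hμ]
    congr 1
    ext i
    fin_cases i <;> simp
    ring
  have hrow : J 1 = J 2 := Matrix.row_eq_of_eq_sum_re_conj_mul hJ (hpartial · θ)
  exact ⟨hpartial, congrFun hrow, Matrix.col_eq_of_eq_sum_re_conj_mul hJ (hpartial · θ),
    Matrix.not_isUnit_of_row_eq (by decide) hrow⟩

theorem stmt9 (S : Type*) [Fintype S]
    (ν : S → (Fin 4 → ℝ) → ℂ) (hν : ∀ s, Differentiable ℝ (ν s))
    (μ : S → (Fin 5 → ℝ) → ℂ)
    (hμ : ∀ s θ, μ s θ = ν s ![θ 0, θ 1 + θ 2, θ 3, θ 4])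
    (σ : ℝ) (hσ : σ > 0) (θ : Fin 5 → ℝ)
    (J : Matrix (Fin 5) (Fin 5) ℝ)
    (hJ : ∀ i j, J i j = ∑ s, (2 / σ ^ 2) *
      ((starRingEnd ℂ) (fderiv ℝ (μ s) θ (Pi.single i 1)) *
        fderiv ℝ (μ s) θ (Pi.single j 1)).re) :
    (∀ s (θ' : Fin 5 → ℝ),
        fderiv ℝ (μ s) θ' (Pi.single 1 1) = fderiv ℝ (μ s) θ' (Pi.single 2 1))
    ∧ (∀ j, J 1 j = J 2 j) ∧ (∀ i, J i 1 = J i 2) ∧ ¬ IsUnit J :=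
  stmt9_general S ν μ hμ σ θ J hJ
end

section
/- Let J be a real symmetric n×n matrix (n ≥ 2) and let k ≠ l be indices such that the k-th and l-th rows of J are equal (J k j = J l j for all j). Let S be the set of indices different from k, and suppose the principal submatrix J_{S,S} is invertible. Then the Schur complement J_{k,k} − J_{k,S} · (J_{S,S})⁻¹ · J_{S,k} equals 0. -/
namespace Matrix

variable {ι R : Type*} [Fintype ι] [DecidableEq ι] [CommRing R]

/-- For a Fisher information matrix this is the equivalent Fisher information of parameter `k`. -/
noncomputable def schurComplementAt (A : Matrix ι ι R) (k : ι) : R :=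
  A k k - (fun i : {i // i ≠ k} => A k i) ⬝ᵥ
    ((A.toBlock (· ≠ k) (· ≠ k))⁻¹ *ᵥ fun i => A i.val k)

/-- Restricted to the indices other than `k`, column `k` is column `l` of the principal
submatrix, so the inverse of that submatrix sends it to a basis vector. -/
theorem schurComplementAt_eq_zero_of_col_eq (A : Matrix ι ι R) {k l : ι} (hlk : l ≠ k)
    (hcol : ∀ i, A i k = A i l)
    (hdet : IsUnit (A.toBlock (· ≠ k) (· ≠ k)).det) :
    A.schurComplementAt k = 0 := by
  have hcol_sub : (fun i : {i // i ≠ k} => A i.val k) =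
      A.toBlock (· ≠ k) (· ≠ k) *ᵥ Pi.single (⟨l, hlk⟩ : {i // i ≠ k}) 1 := by
    ext i
    simp [mulVec_single, hcol]
  rw [schurComplementAt, hcol_sub, mulVec_mulVec, nonsing_inv_mul _ hdet, one_mulVec,
    dotProduct_single, mul_one, hcol, sub_self]

end Matrix

theorem stmt10_general {n : ℕ} (J : Matrix (Fin n) (Fin n) ℝ) (hsymm : J.IsSymm)
    (k l : Fin n) (hkl : k ≠ l) (hrows : ∀ j, J k j = J l j)
    (JSS : Matrix {i : Fin n // i ≠ k} {i : Fin n // i ≠ k} ℝ)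
    (hJSS : JSS = J.submatrix Subtype.val Subtype.val)
    (hinv : IsUnit JSS.det) :
    J k k - dotProduct (fun i : {i : Fin n // i ≠ k} => J k i.val)
      (JSS⁻¹.mulVec fun i : {i : Fin n // i ≠ k} => J i.val k) = 0 := by
  subst hJSS
  have hcols : ∀ i, J i k = J i l := fun i => by
    rw [hsymm.apply, hrows, ← hsymm.apply]
  exact J.schurComplementAt_eq_zero_of_col_eq hkl.symm hcols hinv

theorem stmt10 {n : ℕ} (hn : 2 ≤ n) (J : Matrix (Fin n) (Fin n) ℝ) (hsymm : J.IsSymm)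
    (k l : Fin n) (hkl : k ≠ l) (hrows : ∀ j, J k j = J l j)
    (JSS : Matrix {i : Fin n // i ≠ k} {i : Fin n // i ≠ k} ℝ)
    (hJSS : JSS = J.submatrix Subtype.val Subtype.val)
    (hinv : IsUnit JSS.det) :
    J k k - dotProduct (fun i : {i : Fin n // i ≠ k} => J k i.val)
      (JSS⁻¹.mulVec fun i : {i : Fin n // i ≠ k} => J i.val k) = 0 :=
  stmt10_general J hsymm k l hkl hrows JSS hJSS hinv
end

section
/- Let F : ℝ⁵ → ℂ be differentiable, σ > 0, and for each b in a finite index set let c_b ∈ ℂ with ‖c_b‖ = 1 and μ_b = c_b • F. Then at every point θ, the total Fisher information matrix J = Σ_b (2/σ²)·Re( conj(∂μ_b/∂θ_i(θ)) · ∂μ_b/∂θ_j(θ) ) has rank at most 2; in particular J is a singular (non-invertible) 5×5 matrix, regardless of the number of antennas. -/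
/-!
Multiplying the mean by a unimodular constant `c` multiplies every partial derivative by `c`,
and `conj (c z) (c w) = conj z w`, so all antennas carry the same Fisher information matrix.
Its entries `Re (conj u_i u_j) = Re u_i Re u_j + Im u_i Im u_j` form the Gram matrix of the
vectors `(Re u_i, Im u_i) ∈ ℝ²`, which has rank at most `2` whatever the number of antennas.
-/

open ComplexConjugate Matrix

section FisherInformation

variable {E ι : Type*} [NormedAddCommGroup E] [NormedSpace ℝ E]

noncomputable def fisherInformationMatrix (σ : ℝ) (μ : E → ℂ) (θ : E) (v : ι → E) :
    Matrix ι ι ℝ :=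
  Matrix.of fun i j => (2 / σ ^ 2) * (conj (fderiv ℝ μ θ (v i)) * fderiv ℝ μ θ (v j)).re

lemma Complex.conj_mul_mul_mul_of_norm_eq_one {c : ℂ} (hc : ‖c‖ = 1) (z w : ℂ) :
    conj (c * z) * (c * w) = conj z * w := by
  have hcc : conj c * c = 1 := by simp [Complex.conj_mul', hc]
  rw [map_mul]
  linear_combination (conj z * w) * hcc

lemma fisherInformationMatrix_smul_of_norm_eq_one (σ : ℝ) (F : E → ℂ) (θ : E) (v : ι → E)
    {c : ℂ} (hc : ‖c‖ = 1) :
    fisherInformationMatrix σ (c • F) θ v = fisherInformationMatrix σ F θ v := by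
  ext i j
  simp only [fisherInformationMatrix, of_apply, fderiv_const_smul_field,
    Pi.smul_apply, _root_.smul_apply, smul_eq_mul, Complex.conj_mul_mul_mul_of_norm_eq_one hc]

lemma Matrix.rank_re_conj_mul_le_two [Fintype ι] (u : ι → ℂ) :
    (Matrix.of fun i j => (conj (u i) * u j).re).rank ≤ 2 := by
  let M : Matrix ι (Fin 2) ℝ := Matrix.of fun i => ![(u i).re, (u i).im]
  have hM : (Matrix.of fun i j => (conj (u i) * u j).re) = M * Mᵀ := by
    ext i j
    simp [M, mul_apply, Fin.sum_univ_two]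
  rw [hM]
  calc (M * Mᵀ).rank ≤ Mᵀ.rank := rank_mul_le_right _ _
    _ ≤ 2 := (rank_le_card_height _).trans_eq (Fintype.card_fin 2)

lemma Matrix.rank_smul_le {m n R : Type*} [Fintype m] [Fintype n] [DecidableEq m] [CommRing R]
    [StrongRankCondition R] (r : R) (A : Matrix m n R) : (r • A).rank ≤ A.rank := by
  have : r • A = (r • (1 : Matrix m m R)) * A := by rw [smul_mul, Matrix.one_mul]
  exact this ▸ rank_mul_le_right _ _

lemma rank_fisherInformationMatrix_le_two [Fintype ι] (σ : ℝ) (F : E → ℂ) (θ : E) (v : ι → E) :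
    (fisherInformationMatrix σ F θ v).rank ≤ 2 := by
  classical
  have : fisherInformationMatrix σ F θ v =
      (2 / σ ^ 2) • Matrix.of fun i j => (conj (fderiv ℝ F θ (v i)) * fderiv ℝ F θ (v j)).re :=
    rfl
  rw [this]
  exact (rank_smul_le _ _).trans (rank_re_conj_mul_le_two _)

end FisherInformation

theorem stmt13_general (B : Type*) [Fintype B]
    (F : (Fin 5 → ℝ) → ℂ)
    (σ : ℝ)
    (c : B → ℂ) (hc : ∀ b, ‖c b‖ = 1)
    (μ : B → (Fin 5 → ℝ) → ℂ) (hμ : ∀ b, μ b = c b • F)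
    (θ : Fin 5 → ℝ)
    (J : Matrix (Fin 5) (Fin 5) ℝ)
    (hJ : ∀ i j, J i j = ∑ b, (2 / σ ^ 2) *
      ((starRingEnd ℂ) (fderiv ℝ (μ b) θ (Pi.single i 1)) *
        fderiv ℝ (μ b) θ (Pi.single j 1)).re) :
    J.rank ≤ 2 ∧ ¬ IsUnit J := by
  have hJI :
      J = (Fintype.card B : ℝ) • fisherInformationMatrix σ F θ fun i => Pi.single i 1 := by
    have hJsum : J = ∑ b, fisherInformationMatrix σ (μ b) θ fun i => Pi.single i 1 := by
      ext i j
      simp [hJ, fisherInformationMatrix, Matrix.sum_apply]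
    simp only [hJsum, hμ, fisherInformationMatrix_smul_of_norm_eq_one _ _ _ _ (hc _),
      Finset.sum_const, Finset.card_univ]
    exact (Nat.cast_smul_eq_nsmul ℝ _ _).symm
  have hrank : J.rank ≤ 2 :=
    hJI ▸ (rank_smul_le _ _).trans (rank_fisherInformationMatrix_le_two _ _ _ _)
  refine ⟨hrank, fun hunit => ?_⟩
  have := rank_of_isUnit J hunit
  simp only [Fintype.card_fin] at this
  omega

theorem stmt13 (B : Type*) [Fintype B]
    (F : (Fin 5 → ℝ) → ℂ) (hF : Differentiable ℝ F)
    (σ : ℝ) (hσ : σ > 0)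
    (c : B → ℂ) (hc : ∀ b, ‖c b‖ = 1)
    (μ : B → (Fin 5 → ℝ) → ℂ) (hμ : ∀ b, μ b = c b • F)
    (θ : Fin 5 → ℝ)
    (J : Matrix (Fin 5) (Fin 5) ℝ)
    (hJ : ∀ i j, J i j = ∑ b, (2 / σ ^ 2) *
      ((starRingEnd ℂ) (fderiv ℝ (μ b) θ (Pi.single i 1)) *
        fderiv ℝ (μ b) θ (Pi.single j 1)).re) :
    J.rank ≤ 2 ∧ ¬ IsUnit J :=
  stmt13_general B F σ c hc μ hμ θ J hJ
end

section
/- Let c > 0, K > 0, N ≠ 0 be real numbers and s : Fin 3 → ℝ. Let J̄ be the real symmetric 5×5 matrix with J̄_{1,1} = c, J̄_{1,j} = J̄_{j,1} = 0 for j ∈ {2,3,4,5}, J̄_{2,2} = K·N², J̄_{2,k+2} = J̄_{k+2,2} = K·N·s_k for k ∈ {1,2,3}, and J̄_{k+2,l+2} = K·s_k·s_l for k, l ∈ {1,2,3}. Then the 2×2 nuisance block J̄_{1:2,1:2} is invertible, and the equivalent Fisher information matrix J̄_E(η) := J̄_{3:5,3:5} − J̄_{3:5,1:2} · (J̄_{1:2,1:2})⁻¹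 · J̄_{1:2,3:5} is the zero 3×3 matrix. -/
/-- Embedding of the nuisance-parameter indices {1,2} (1-based), i.e. {0,1} (0-based),
into the five indices. -/
def nuisIdx : Fin 2 → Fin 5 := fun i => ⟨i.val, by omega⟩

/-- Embedding of the position-related indices {3,4,5} (1-based), i.e. {2,3,4} (0-based),
into the five indices. -/
def posIdx : Fin 3 → Fin 5 := fun k => ⟨k.val + 2, by omega⟩

theorem stmt14 (c K N : ℝ) (hc : c > 0) (hK : K > 0) (hN : N ≠ 0) (s : Fin 3 → ℝ)
    (J : Matrix (Fin 5) (Fin 5) ℝ)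
    (h11 : J 0 0 = c)
    (h1j : ∀ j : Fin 5, j ≠ 0 → J 0 j = 0 ∧ J j 0 = 0)
    (h22 : J 1 1 = K * N ^ 2)
    (h2k : ∀ k : Fin 3, J 1 (posIdx k) = K * N * s k ∧ J (posIdx k) 1 = K * N * s k)
    (hkl : ∀ k l : Fin 3, J (posIdx k) (posIdx l) = K * s k * s l)
    (A : Matrix (Fin 2) (Fin 2) ℝ) (hA : A = J.submatrix nuisIdx nuisIdx) :
    IsUnit A.det ∧
      J.submatrix posIdx posIdx
        - J.submatrix posIdx nuisIdx * A⁻¹ * J.submatrix nuisIdx posIdx = 0 := by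
  have hA01 : A 0 1 = 0 := by
    rw [hA]; exact (h1j 1 (by decide)).1
  have hA10 : A 1 0 = 0 := by
    rw [hA]; exact (h1j 1 (by decide)).2
  have hA00 : A 0 0 = c := by rw [hA]; exact h11
  have hA11 : A 1 1 = K * N ^ 2 := by rw [hA]; exact h22
  have hdet : A.det = c * (K * N ^ 2) := by
    rw [Matrix.det_fin_two, hA00, hA11, hA01, hA10]; ring
  have hne : A.det ≠ 0 := by
    rw [hdet]
    positivity
  have hinv : A⁻¹ = Matrix.of ![![1 / c, 0], ![0, 1 / (K * N ^ 2)]] := by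
    have h : A * Matrix.of ![![1 / c, 0], ![0, 1 / (K * N ^ 2)]] = 1 := by
      ext i j
      fin_cases i <;> fin_cases j <;>
        simp [Matrix.mul_apply, Fin.sum_univ_two, hA00, hA01, hA10, hA11] <;>
        field_simp <;> ring
    exact Matrix.inv_eq_right_inv h
  refine ⟨isUnit_iff_ne_zero.mpr hne, ?_⟩
  ext i j
  have hpos1 : ∀ k : Fin 3, posIdx k ≠ 0 := by decide
  simp only [Matrix.sub_apply, Matrix.mul_apply, Matrix.submatrix_apply, hinv,
    Fin.sum_univ_two, Fin.sum_univ_three, Matrix.zero_apply]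
  have e0 : nuisIdx 0 = 0 := rfl
  have e1 : nuisIdx 1 = 1 := rfl
  rw [e0, e1, (h1j (posIdx i) (hpos1 i)).2, (h1j (posIdx j) (hpos1 j)).1,
    (h2k i).2, (h2k j).1, hkl]
  simp only [Matrix.of_apply]
  norm_num [Matrix.cons_val_zero, Matrix.cons_val_one]
  field_simp
  ring
end
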